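/- Uniform lower bound on the potential term: with V, U, h < 0 and r_LJ as above, for any absolutely continuous path u : [0,1] → ℝ² with |u(s)| ≤ r < r_LJ for all s and u ≠ 0 a.e., one has ∫₀¹ (h + V(u(s))) ds ≥ h + r^{−α} U_min > −αh/(2−α) > 0. -/
import Mathlib


open Set MeasureTheory intervalIntegral

noncomputable def Vpot (α : ℝ) (U : EuclideanSpace ℝ (Fin 2) → ℝ)
    (x : EuclideanSpace ℝ (Fin 2)) : ℝ :=
  ‖x‖ ^ (-α) * U (‖x‖⁻¹ • x)

/-- Uniform lower bound on the potential term: if `|u(s)| ≤ r < r_LJ` and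
`u ≠ 0` a.e., then `∫₀¹ (h + V(u)) ≥ h + r^{−α} U_min > −αh/(2−α) > 0`. -/
theorem potential_term_lower_bound
    (α h Umin r : ℝ) (hα : α ∈ Set.Ioo (0:ℝ) 2) (hh : h < 0)
    (U : EuclideanSpace ℝ (Fin 2) → ℝ) (hUcont : Continuous U)
    (hUmin : ∀ s : EuclideanSpace ℝ (Fin 2), ‖s‖ = 1 → Umin ≤ U s)
    (hUminpos : 0 < Umin)
    (hr : 0 < r) (hrLJ : r < ((2 - α) * Umin / (-2 * h)) ^ (1/α))
    (u : ℝ → EuclideanSpace ℝ (Fin 2))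
    (hbound : ∀ s ∈ Icc (0:ℝ) 1, ‖u s‖ ≤ r)
    (hae : ∀ᵐ s, s ∈ Icc (0:ℝ) 1 → u s ≠ 0)
    (hint : IntervalIntegrable (fun s => h + Vpot α U (u s)) volume 0 1) :
    (∫ s in (0:ℝ)..1, (h + Vpot α U (u s))) ≥ h + r ^ (-α) * Umin ∧
    h + r ^ (-α) * Umin > -α * h / (2 - α) ∧
    (0:ℝ) < -α * h / (2 - α) := by
  obtain ⟨hα0, hα2⟩ := hα
  have h2α : 0 < 2 - α := by linarith
  have hneg2h : 0 < -2 * h := by linarith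
  have hbase : 0 < (2 - α) * Umin / (-2 * h) := by positivity
  -- algebra: r^α < base
  have hpow : (((2 - α) * Umin / (-2 * h)) ^ (1/α)) ^ α
      = (2 - α) * Umin / (-2 * h) := by
    rw [← Real.rpow_mul hbase.le, one_div, inv_mul_cancel₀ hα0.ne', Real.rpow_one]
  have hrα : r ^ α < (2 - α) * Umin / (-2 * h) :=
    hpow ▸ Real.rpow_lt_rpow hr.le hrLJ hα0
  have hrαpos : 0 < r ^ α := Real.rpow_pos_of_pos hr α
  have hrneg : r ^ (-α) = (r ^ α)⁻¹ := Real.rpow_neg hr.le α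
  have hcpos : 0 < r ^ (-α) := Real.rpow_pos_of_pos hr (-α)
  have hkey : h + r ^ (-α) * Umin > -α * h / (2 - α) := by
    rw [gt_iff_lt, div_lt_iff₀ h2α]
    have h1 : r ^ α * (-2 * h) < (2 - α) * Umin := by
      rw [lt_div_iff₀ hneg2h] at hrα; exact hrα
    have h2 : r ^ (-α) * r ^ α = 1 := by
      rw [hrneg, inv_mul_cancel₀ hrαpos.ne']
    nlinarith [mul_lt_mul_of_pos_left h1 hcpos]
  have hpos : (0:ℝ) < -α * h / (2 - α) := by
    apply div_pos _ h2α; nlinarith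
  refine ⟨?_, hkey, hpos⟩
  have hmono : (∫ s in (0:ℝ)..1, (h + r ^ (-α) * Umin))
      ≤ ∫ s in (0:ℝ)..1, (h + Vpot α U (u s)) := by
    apply intervalIntegral.integral_mono_ae_restrict (by norm_num)
      intervalIntegrable_const hint
    rw [Filter.EventuallyLE, ae_restrict_iff' measurableSet_Icc]
    filter_upwards [hae] with s hs hsIcc
    have hu0 : u s ≠ 0 := hs hsIcc
    have hn : 0 < ‖u s‖ := norm_pos_iff.mpr hu0
    have hnr : ‖u s‖ ≤ r := hbound s hsIcc
    have hunit : ‖(‖u s‖⁻¹ • u s)‖ = 1 := by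
      rw [norm_smul, norm_inv, norm_norm, inv_mul_cancel₀ hn.ne']
    have h1 : r ^ (-α) ≤ ‖u s‖ ^ (-α) :=
      Real.rpow_le_rpow_of_nonpos hn hnr (by linarith)
    have h2 : Umin ≤ U (‖u s‖⁻¹ • u s) := hUmin _ hunit
    have : r ^ (-α) * Umin ≤ ‖u s‖ ^ (-α) * U (‖u s‖⁻¹ • u s) :=
      mul_le_mul h1 h2 hUminpos.le (Real.rpow_nonneg hn.le _)
    simpa [Vpot] using add_le_add_left this h
  calc h + r ^ (-α) * Umin = ∫ s in (0:ℝ)..1, (h + r ^ (-α) * Umin) := by simp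
    _ ≤ _ := hmono
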